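/- Sensitivity under a local change, element outside the basis: Let M be a loopless matroid, x and x' weightings differing only at element e, and B an x-optimal basis with e ∉ B. Then B is x'-optimal if and only if x'(e) ≥ μ_e(x). -/

import Mathlib

open Matroid Set

variable {α : Type*}

/-- A circuit of a matroid: a minimal dependent set. -/
def Matroid.PaperIsCircuit (M : Matroid α) (C : Set α) : Prop :=
  M.Dep C ∧ ∀ ⦃D⦄, D ⊂ C → M.Indep D

/-- Looplessness in the sense of the paper: no element is a loop
(every singleton of the ground set is independent) and no element is a
coloop (no element lies in all bases). -/
def Matroid.PaperLoopless (M : Matroid α) : Prop :=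
  ∀ e ∈ M.E, M.Indep {e} ∧ ∃ B, M.IsBase B ∧ e ∉ B

/-- The weight `x(B)` of a set of ground elements. -/
noncomputable def setWeight (x : α → ℝ) (B : Set α) : ℝ := ∑ᶠ e ∈ B, x e

/-- The min-max weight `μ_e(x)`: the minimum over circuits `C` containing `e`
of the maximum weight of an element of `C - e`. -/
noncomputable def muWeight (M : Matroid α) (x : α → ℝ) (e : α) : ℝ :=
  sInf {w | ∃ C, M.PaperIsCircuit C ∧ e ∈ C ∧ w = sSup (x '' (C \ {e}))}

/-- The bottleneck weight `b_e(x) = min {x(e), μ_e(x)}`. -/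
noncomputable def bottleneck (M : Matroid α) (x : α → ℝ) (e : α) : ℝ :=
  min (x e) (muWeight M x e)

/-- The minimum weight of a basis of `M`. -/
noncomputable def mwb (M : Matroid α) (x : α → ℝ) : ℝ :=
  sInf {w | ∃ B, M.IsBase B ∧ w = setWeight x B}

/-- `B` is an `x`-optimal basis of `M`. -/
def IsOptimalBase (M : Matroid α) (x : α → ℝ) (B : Set α) : Prop :=
  M.IsBase B ∧ ∀ B', M.IsBase B' → setWeight x B ≤ setWeight x B'

/-- Deletion of a single element. -/
noncomputable def Matroid.del (M : Matroid α) (e : α) : Matroid α :=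
  M ↾ (M.E \ {e})

/-- Contraction of a single element, defined by duality: `M/e = (M✶ \ e)✶`. -/
noncomputable def Matroid.con (M : Matroid α) (e : α) : Matroid α :=
  ((M✶ ↾ (M.E \ {e}))✶)

/-!
Since `e ∉ B`, `x'(B) = x(B)`. If `B` stays optimal, exchange `e` into `B` along its
fundamental circuit `C₀`, against the heaviest `f ∈ C₀ - e`: optimality gives
`x(f) ≤ x'(e)`, and `μ_e(x) ≤ x(f)`. Conversely, let `C` be a circuit realising `μ_e(x)` and
`B'` a basis containing `e`. Some `f ∈ C - e` lies outside the closure of `B' - e`, so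
`B' - e + f` is a basis avoiding `e`, and
`x'(B') = x(B' - e + f) - x(f) + x'(e) ≥ x(B) + (x'(e) - μ_e(x)) ≥ x'(B)`.
-/

section Weight

variable {s : Set α} {e f : α}

lemma setWeight_insert_sdiff_add (x : α → ℝ) (hs : s.Finite) (hf : f ∈ s) (he : e ∉ s) :
    setWeight x (insert e (s \ {f})) + x f = setWeight x s + x e := by
  have hsf : setWeight x s = x f + setWeight x (s \ {f}) := by
    conv_lhs => rw [← insert_sdiff_self_of_mem hf]
    exact finsum_mem_insert _ (fun h => h.2 rfl) hs.sdiff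
  rw [setWeight, finsum_mem_insert _ (fun h => he h.1) hs.sdiff, ← setWeight, hsf]
  ring

lemma setWeight_eq_of_notMem {x x' : α → ℝ} (hx : ∀ f, f ≠ e → x' f = x f) (he : e ∉ s) :
    setWeight x' s = setWeight x s :=
  finsum_mem_congr rfl fun f hf => hx f (ne_of_mem_of_not_mem hf he)

end Weight

namespace Matroid

variable {M : Matroid α} {B C : Set α} {e f : α}

lemma paperIsCircuit_iff : M.PaperIsCircuit C ↔ M.IsCircuit C :=
  isCircuit_iff_forall_ssubset.symm

lemma IsCircuit.sdiff_singleton_nonempty (hC : M.IsCircuit C) (he : M.IsNonloop e) :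
    (C \ {e}).Nonempty := by
  rw [nonempty_iff_ne_empty, Ne, sdiff_eq_empty]
  exact fun hCe => hC.not_indep (he.indep.subset hCe)

lemma IsBase.isBase_insert_sdiff_of_mem_fundCircuit (hB : M.IsBase B) (he : e ∈ M.E)
    (heB : e ∉ B) (hf : f ∈ M.fundCircuit e B \ {e}) : M.IsBase (insert e (B \ {f})) := by
  have hecl : e ∈ M.closure B := hB.closure_eq ▸ he
  have hI := (hB.indep.mem_fundCircuit_iff hecl heB).1 hf.1
  rw [← insert_sdiff_singleton_comm (Ne.symm hf.2)] at hI
  exact hB.exchange_isBase_of_indep heB hI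

lemma IsCircuit.exists_isBase_insert_sdiff (hC : M.IsCircuit C) (hB : M.IsBase B) (heC : e ∈ C)
    (heB : e ∈ B) : ∃ f ∈ C \ {e}, f ∉ B ∧ M.IsBase (insert f (B \ {e})) := by
  have hC_not_sub : ¬ C \ {e} ⊆ M.closure (B \ {e}) := fun h =>
    hB.indep.notMem_closure_sdiff_of_mem heB
      (M.closure_subset_closure_of_subset_closure h (hC.mem_closure_sdiff_singleton_of_mem heC))
  obtain ⟨f, hf, hfcl⟩ := not_subset.1 hC_not_sub
  have hfB : f ∉ B := fun hfB =>
    hfcl (M.subset_closure _ (sdiff_subset.trans hB.subset_ground) ⟨hfB, hf.2⟩)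
  exact ⟨f, hf, hfB, hB.exchange_base_of_notMem_closure heB hfcl (hC.subset_ground hf.1)⟩

end Matroid

lemma muWeight_set_finite (M : Matroid α) [M.Finite] (x : α → ℝ) (e : α) :
    {w | ∃ C, M.PaperIsCircuit C ∧ e ∈ C ∧ w = sSup (x '' (C \ {e}))}.Finite := by
  refine (M.ground_finite.finite_subsets.image fun C => sSup (x '' (C \ {e}))).subset ?_
  rintro w ⟨C, hC, -, rfl⟩
  exact ⟨C, hC.1.subset_ground, rfl⟩

section MuWeight

variable {M : Matroid α} [M.Finite] {x : α → ℝ} {C : Set α} {e f : α}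

lemma muWeight_le_of_isCircuit (hC : M.IsCircuit C) (heC : e ∈ C) (hf : f ∈ C \ {e})
    (hmax : ∀ g ∈ C \ {e}, x g ≤ x f) : muWeight M x e ≤ x f :=
  calc muWeight M x e ≤ sSup (x '' (C \ {e})) :=
        csInf_le (muWeight_set_finite M x e).bddBelow ⟨C, paperIsCircuit_iff.2 hC, heC, rfl⟩
    _ ≤ x f := csSup_le ((nonempty_of_mem hf).image x) (forall_mem_image.2 hmax)

lemma exists_isCircuit_forall_le_muWeight (h : ∃ C, M.IsCircuit C ∧ e ∈ C) :
    ∃ C, M.IsCircuit C ∧ e ∈ C ∧ ∀ f ∈ C \ {e}, x f ≤ muWeight M x e := by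
  obtain ⟨C₀, hC₀, heC₀⟩ := h
  obtain ⟨C, hC, heC, hmu⟩ := Nonempty.csInf_mem
    (s := {w | ∃ C, M.PaperIsCircuit C ∧ e ∈ C ∧ w = sSup (x '' (C \ {e}))})
    ⟨_, C₀, paperIsCircuit_iff.2 hC₀, heC₀, rfl⟩ (muWeight_set_finite M x e)
  refine ⟨C, paperIsCircuit_iff.1 hC, heC, fun f hf => ?_⟩
  rw [muWeight, hmu]
  exact le_csSup ((paperIsCircuit_iff.1 hC).finite.sdiff.image x).bddAbove (mem_image_of_mem x hf)

end MuWeight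

/-- local sensitivity for an element outside the optimal basis. -/
theorem stmt16 (M : Matroid α) [M.Finite] (hM : M.PaperLoopless)
    (x x' : α → ℝ) {e : α} (he : e ∈ M.E)
    (hdiff : ∀ f, f ≠ e → x' f = x f)
    {B : Set α} (hB : IsOptimalBase M x B) (heB : e ∉ B) :
    IsOptimalBase M x' B ↔ x' e ≥ muWeight M x e := by
  have hBfin : B.Finite := M.set_finite B hB.1.subset_ground
  have hwB : setWeight x' B = setWeight x B := setWeight_eq_of_notMem hdiff heB
  have hC₀ : M.IsCircuit (M.fundCircuit e B) := hB.1.fundCircuit_isCircuit he heB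
  constructor
  · rintro ⟨-, hopt⟩
    obtain ⟨f, hf, hmax⟩ := exists_max_image _ x hC₀.finite.sdiff
      (hC₀.sdiff_singleton_nonempty (indep_singleton.1 (hM e he).1))
    have hfB : f ∈ B := (M.fundCircuit_sdiff_eq_inter heB ▸ hf).2
    have hswap := setWeight_insert_sdiff_add x' hBfin hfB heB
    have hle := hopt _ (hB.1.isBase_insert_sdiff_of_mem_fundCircuit he heB hf)
    have hxf : x' f = x f := hdiff f hf.2
    have hmu := muWeight_le_of_isCircuit hC₀ (M.mem_fundCircuit e B) hf hmax
    linarith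
  · refine fun hge => ⟨hB.1, fun B' hB' => ?_⟩
    by_cases heB' : e ∈ B'
    · obtain ⟨C, hC, heC, hCmu⟩ :=
        exists_isCircuit_forall_le_muWeight (x := x) ⟨_, hC₀, M.mem_fundCircuit e B⟩
      obtain ⟨f, hf, hfB', hB''⟩ := hC.exists_isBase_insert_sdiff hB' heC heB'
      have hswap := setWeight_insert_sdiff_add x' (M.set_finite B' hB'.subset_ground) heB' hfB'
      have hw'' := setWeight_eq_of_notMem (s := insert f (B' \ {e})) hdiff
        (by simp [Ne.symm hf.2])
      have hle := hB.2 _ hB''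
      have hxf : x' f = x f := hdiff f hf.2
      have hfmu := hCmu f hf
      linarith
    · rw [hwB, setWeight_eq_of_notMem hdiff heB']
      exact hB.2 _ hB'
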